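/- Let n, m ≥ 3. The signless Laplacian characteristic polynomial of the Union Jack lattice factors as det(x·I_{2mn} − Q(UJL(n,m))) = ∏_{i=0}^{n−1} ∏_{j=0}^{m−1} [ x² − 12x + 28 − (x − 2)(2 cos α_i + 2 cos β_j) − 4 cos α_i · cos β_j ], where α_i = 2πi/n and β_j = 2πj/m. -/
import Mathlib


open scoped Classical

noncomputable section

/-- Vertex set of the Union Jack lattice `UJL(n,m)`: the first summand consists of the
"grid vertices" of the `n × m` toroidal square lattice, the second summand of the
"face vertices" inserted in each face. -/
abbrev UJLVert (n m : ℕ) : Type := (ZMod n × ZMod m) ⊕ (ZMod n × ZMod m)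

/-- Base adjacency relation of the Union Jack lattice (to be symmetrized):
grid vertex `(i,j)` is related to the grid vertices `(i+1,j)` and `(i,j+1)`
(symmetrization yields all four grid neighbours `(i±1,j)`, `(i,j±1)`), and the
grid vertex `(i,j)` is related to the face vertices `(i,j)`, `(i-1,j)`, `(i,j-1)`,
`(i-1,j-1)`, i.e. the face vertex `(k,l)` is adjacent to the grid vertices
`(k,l)`, `(k+1,l)`, `(k,l+1)`, `(k+1,l+1)`. -/
def UJLRel (n m : ℕ) : UJLVert n m → UJLVert n m → Prop
  | Sum.inl p, Sum.inl q => (q.1 = p.1 + 1 ∧ q.2 = p.2) ∨ (q.1 = p.1 ∧ q.2 = p.2 + 1)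
  | Sum.inl p, Sum.inr q =>
      (q.1 = p.1 ∧ q.2 = p.2) ∨ (q.1 = p.1 - 1 ∧ q.2 = p.2) ∨
        (q.1 = p.1 ∧ q.2 = p.2 - 1) ∨ (q.1 = p.1 - 1 ∧ q.2 = p.2 - 1)
  | _, _ => False

/-- The Union Jack lattice `UJL(n,m)` with toroidal boundary condition. -/
def UJL (n m : ℕ) : SimpleGraph (UJLVert n m) := SimpleGraph.fromRel (UJLRel n m)

/-- `cos α_i` where `α_i = 2 π i / n`. -/
def cosα (n i : ℕ) : ℝ := Real.cos (2 * Real.pi * i / n)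

/-- The signless Laplacian matrix `Q(UJL(n,m)) = D(UJL(n,m)) + A(UJL(n,m))`. -/
def signlessLaplacianUJL (n m : ℕ) [NeZero n] [NeZero m] :
    Matrix (UJLVert n m) (UJLVert n m) ℝ :=
  Matrix.diagonal (fun v => ((UJL n m).degree v : ℝ)) + (UJL n m).adjMatrix ℝ

namespace UJLProof

open Matrix Complex Finset

/-! ### Characters of `ZMod n` -/

/-- The standard additive character of `ZMod n` with values in `ℂ`. -/
def χ (n : ℕ) (a : ZMod n) : ℂ := Complex.exp (2 * Real.pi * Complex.I / n) ^ a.val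

variable {n m : ℕ}

lemma zeta_pow_n [NeZero n] : Complex.exp (2 * Real.pi * Complex.I / n) ^ n = 1 :=
  (Complex.isPrimitiveRoot_exp n (NeZero.ne n)).pow_eq_one

lemma pow_mod_eq {u : ℂ} (h : u ^ n = 1) (k : ℕ) : u ^ (k % n) = u ^ k := by
  conv_rhs => rw [← Nat.mod_add_div k n, pow_add, pow_mul, h, one_pow, mul_one]

lemma χ_zero [NeZero n] : χ n 0 = 1 := by simp [χ, ZMod.val_zero]

lemma χ_add [NeZero n] (a b : ZMod n) : χ n (a + b) = χ n a * χ n b := by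
  unfold χ
  rw [ZMod.val_add, pow_mod_eq zeta_pow_n, pow_add]

lemma χ_ne_zero [NeZero n] (a : ZMod n) : χ n a ≠ 0 :=
  pow_ne_zero _ (Complex.exp_ne_zero _)

lemma χ_nsmul [NeZero n] (k : ℕ) (a : ZMod n) : χ n (k • a) = χ n a ^ k := by
  induction k with
  | zero => simp [χ_zero]
  | succ k ih => rw [succ_nsmul, χ_add, ih, pow_succ]

lemma χ_eq_one_iff [NeZero n] (a : ZMod n) : χ n a = 1 ↔ a = 0 := by
  constructor
  · intro h
    have hprim := Complex.isPrimitiveRoot_exp n (NeZero.ne n)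
    have h0 : χ n a = Complex.exp (2 * Real.pi * Complex.I / n) ^ (0 : ℕ) := by
      simpa using h
    have := hprim.pow_inj (ZMod.val_lt a) (Nat.pos_of_ne_zero (NeZero.ne n)) h0
    exact (ZMod.val_eq_zero a).mp this
  · rintro rfl; exact χ_zero

lemma χ_mul_χ_neg [NeZero n] (a : ZMod n) : χ n a * χ n (-a) = 1 := by
  rw [← χ_add, add_neg_cancel, χ_zero]

/-! ### Sums and products over `ZMod n` -/

lemma sum_val_range [NeZero n] {M : Type*} [AddCommMonoid M] (g : ℕ → M) :
    ∑ c : ZMod n, g c.val = ∑ i ∈ Finset.range n, g i := by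
  refine Finset.sum_nbij' (fun c : ZMod n => c.val) (fun i : ℕ => (i : ZMod n)) ?_ ?_ ?_ ?_ ?_
  · intro a _; exact Finset.mem_range.2 (ZMod.val_lt a)
  · intro a _; exact Finset.mem_univ _
  · intro a _; exact ZMod.natCast_rightInverse a
  · intro a ha; exact ZMod.val_cast_of_lt (Finset.mem_range.1 ha)
  · intro a _; rfl

lemma prod_ZMod [NeZero n] {M : Type*} [CommMonoid M] (g : ZMod n → M) :
    ∏ c : ZMod n, g c = ∏ i ∈ Finset.range n, g (i : ZMod n) := by
  refine Finset.prod_nbij' (fun c : ZMod n => c.val) (fun i : ℕ => (i : ZMod n)) ?_ ?_ ?_ ?_ ?_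
  · intro a _; exact Finset.mem_range.2 (ZMod.val_lt a)
  · intro a _; exact Finset.mem_univ _
  · intro a _; exact ZMod.natCast_rightInverse a
  · intro a ha; exact ZMod.val_cast_of_lt (Finset.mem_range.1 ha)
  · intro a _; exact (congrArg g (ZMod.natCast_rightInverse a)).symm

lemma sum_χ_mul [NeZero n] (d : ZMod n) :
    ∑ c : ZMod n, χ n (c * d) = if d = 0 then (n : ℂ) else 0 := by
  have h1 : ∀ c : ZMod n, χ n (c * d) = χ n d ^ c.val := by
    intro c
    rw [← χ_nsmul]
    congr 1
    rw [nsmul_eq_mul, ZMod.natCast_rightInverse c]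
  simp only [h1]
  rw [sum_val_range (g := fun i => χ n d ^ i)]
  by_cases hd : d = 0
  · subst hd; simp [χ_zero]
  · rw [if_neg hd]
    have hu1 : χ n d ≠ 1 := fun h => hd ((χ_eq_one_iff d).mp h)
    have hun : χ n d ^ n = 1 := by
      rw [← χ_nsmul]
      have : (n : ℕ) • d = 0 := by
        rw [nsmul_eq_mul, ZMod.natCast_self, zero_mul]
      rw [this, χ_zero]
    rw [geom_sum_eq hu1, hun, sub_self, zero_div]

/-! ### The Fourier matrices -/

/-- The two-dimensional Fourier (character) matrix. -/
def Fm (n m : ℕ) : Matrix (ZMod n × ZMod m) (ZMod n × ZMod m) ℂ :=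
  fun p q => χ n (p.1 * q.1) * χ m (p.2 * q.2)

/-- The conjugate Fourier matrix. -/
def Gm (n m : ℕ) : Matrix (ZMod n × ZMod m) (ZMod n × ZMod m) ℂ :=
  fun p q => χ n (-(p.1 * q.1)) * χ m (-(p.2 * q.2))

lemma Fm_mul_Gm [NeZero n] [NeZero m] :
    Fm n m * Gm n m = ((n * m : ℕ) : ℂ) • 1 := by
  ext p q
  rw [Matrix.mul_apply]
  have h1 : ∀ c : ZMod n × ZMod m,
      Fm n m p c * Gm n m c q
        = χ n (c.1 * (p.1 - q.1)) * χ m (c.2 * (p.2 - q.2)) := by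
    intro c
    simp only [Fm, Gm]
    rw [mul_mul_mul_comm, ← χ_add, ← χ_add]
    congr 2 <;> ring
  simp only [h1]
  rw [Fintype.sum_prod_type]
  have h2 : ∀ (a : ZMod n) (b : ZMod m),
      χ n ((a, b).1 * (p.1 - q.1)) * χ m ((a, b).2 * (p.2 - q.2))
        = χ n (a * (p.1 - q.1)) * χ m (b * (p.2 - q.2)) := fun _ _ => rfl
  simp only [h2]
  rw [← Finset.sum_mul_sum, sum_χ_mul, sum_χ_mul]
  rcases eq_or_ne p q with rfl | hpq
  · simp [Matrix.smul_apply, Matrix.one_apply]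
  · have : p.1 - q.1 ≠ 0 ∨ p.2 - q.2 ≠ 0 := by
      by_contra h
      push_neg at h
      exact hpq (Prod.ext (sub_eq_zero.mp h.1) (sub_eq_zero.mp h.2))
    rcases this with h | h
    · rw [if_neg h, zero_mul, Matrix.smul_apply, Matrix.one_apply_ne hpq, smul_zero]
    · rw [if_neg h, mul_zero, Matrix.smul_apply, Matrix.one_apply_ne hpq, smul_zero]

/-! ### Simple `ZMod` facts -/

lemma natCast_ne_zero' [NeZero n] {k : ℕ} (hk : 0 < k) (hkn : k < n) :
    ((k : ℕ) : ZMod n) ≠ 0 := by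
  intro h
  have h2 := ZMod.val_cast_of_lt hkn
  rw [h, ZMod.val_zero] at h2
  omega

lemma one_ne_zero_mod (hn : 3 ≤ n) : (1 : ZMod n) ≠ 0 := by
  haveI : NeZero n := ⟨by omega⟩
  have := natCast_ne_zero' (n := n) (k := 1) one_pos (by omega)
  simpa using this

lemma two_ne_zero_mod (hn : 3 ≤ n) : (2 : ZMod n) ≠ 0 := by
  haveI : NeZero n := ⟨by omega⟩
  have := natCast_ne_zero' (n := n) (k := 2) two_pos (by omega)
  simpa using this

/-! ### Adjacency characterizations -/

lemma adj_ll (hn : 3 ≤ n) (hm : 3 ≤ m) (p c : ZMod n × ZMod m) :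
    (UJL n m).Adj (Sum.inl p) (Sum.inl c) ↔
      c = (p.1 + 1, p.2) ∨ c = (p.1 - 1, p.2) ∨ c = (p.1, p.2 + 1) ∨ c = (p.1, p.2 - 1) := by
  have h1n : (1 : ZMod n) ≠ 0 := one_ne_zero_mod hn
  have h1m : (1 : ZMod m) ≠ 0 := one_ne_zero_mod hm
  rw [UJL, SimpleGraph.fromRel_adj]
  simp only [UJLRel]
  constructor
  · rintro ⟨-, (⟨h1, h2⟩ | ⟨h1, h2⟩) | (⟨h1, h2⟩ | ⟨h1, h2⟩)⟩
    · exact Or.inl (Prod.ext h1 h2)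
    · exact Or.inr (Or.inr (Or.inl (Prod.ext h1 h2)))
    · exact Or.inr (Or.inl (Prod.ext (eq_sub_of_add_eq h1.symm) h2.symm))
    · exact Or.inr (Or.inr (Or.inr (Prod.ext h1.symm (eq_sub_of_add_eq h2.symm))))
  · rintro (rfl | rfl | rfl | rfl)
    · refine ⟨?_, Or.inl (Or.inl ⟨rfl, rfl⟩)⟩
      simp only [ne_eq, Sum.inl.injEq, Prod.ext_iff]
      rintro ⟨h, -⟩; exact h1n (by linear_combination -h)
    · refine ⟨?_, Or.inr (Or.inl ⟨by ring, rfl⟩)⟩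
      simp only [ne_eq, Sum.inl.injEq, Prod.ext_iff]
      rintro ⟨h, -⟩; exact h1n (by linear_combination h)
    · refine ⟨?_, Or.inl (Or.inr ⟨rfl, rfl⟩)⟩
      simp only [ne_eq, Sum.inl.injEq, Prod.ext_iff]
      rintro ⟨-, h⟩; exact h1m (by linear_combination -h)
    · refine ⟨?_, Or.inr (Or.inr ⟨rfl, by ring⟩)⟩
      simp only [ne_eq, Sum.inl.injEq, Prod.ext_iff]
      rintro ⟨-, h⟩; exact h1m (by linear_combination h)

lemma adj_lr (p c : ZMod n × ZMod m) :
    (UJL n m).Adj (Sum.inl p) (Sum.inr c) ↔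
      c = p ∨ c = (p.1 - 1, p.2) ∨ c = (p.1, p.2 - 1) ∨ c = (p.1 - 1, p.2 - 1) := by
  rw [UJL, SimpleGraph.fromRel_adj]
  simp only [UJLRel, or_false, ne_eq]
  constructor
  · rintro ⟨-, (⟨h1, h2⟩ | ⟨h1, h2⟩ | ⟨h1, h2⟩ | ⟨h1, h2⟩)⟩
    · exact Or.inl (Prod.ext h1 h2)
    · exact Or.inr (Or.inl (Prod.ext h1 h2))
    · exact Or.inr (Or.inr (Or.inl (Prod.ext h1 h2)))
    · exact Or.inr (Or.inr (Or.inr (Prod.ext h1 h2)))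
  · rintro (rfl | rfl | rfl | rfl)
    · exact ⟨by simp, Or.inl ⟨rfl, rfl⟩⟩
    · exact ⟨by simp, Or.inr (Or.inl ⟨rfl, rfl⟩)⟩
    · exact ⟨by simp, Or.inr (Or.inr (Or.inl ⟨rfl, rfl⟩))⟩
    · exact ⟨by simp, Or.inr (Or.inr (Or.inr ⟨rfl, rfl⟩))⟩

lemma adj_rl (p c : ZMod n × ZMod m) :
    (UJL n m).Adj (Sum.inr p) (Sum.inl c) ↔
      c = p ∨ c = (p.1 + 1, p.2) ∨ c = (p.1, p.2 + 1) ∨ c = (p.1 + 1, p.2 + 1) := by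
  rw [UJL, SimpleGraph.fromRel_adj]
  simp only [UJLRel, false_or, ne_eq]
  constructor
  · rintro ⟨-, (⟨h1, h2⟩ | ⟨h1, h2⟩ | ⟨h1, h2⟩ | ⟨h1, h2⟩)⟩
    · exact Or.inl (Prod.ext h1.symm h2.symm)
    · exact Or.inr (Or.inl (Prod.ext (eq_add_of_sub_eq h1.symm) h2.symm))
    · exact Or.inr (Or.inr (Or.inl (Prod.ext h1.symm (eq_add_of_sub_eq h2.symm))))
    · exact Or.inr (Or.inr (Or.inr
        (Prod.ext (eq_add_of_sub_eq h1.symm) (eq_add_of_sub_eq h2.symm))))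
  · rintro (rfl | rfl | rfl | rfl)
    · exact ⟨by simp, Or.inl ⟨rfl, rfl⟩⟩
    · exact ⟨by simp, Or.inr (Or.inl ⟨by ring, rfl⟩)⟩
    · exact ⟨by simp, Or.inr (Or.inr (Or.inl ⟨rfl, by ring⟩))⟩
    · exact ⟨by simp, Or.inr (Or.inr (Or.inr ⟨by ring, by ring⟩))⟩

lemma adj_rr (p c : ZMod n × ZMod m) : ¬ (UJL n m).Adj (Sum.inr p) (Sum.inr c) := by
  rw [UJL, SimpleGraph.fromRel_adj]
  simp [UJLRel]

/-! ### A four-term indicator sum -/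

lemma sum_ite_four {α M : Type*} [Fintype α] [DecidableEq α] [AddCommMonoid M]
    {a b c d : α} (hab : a ≠ b) (hac : a ≠ c) (had : a ≠ d) (hbc : b ≠ c) (hbd : b ≠ d)
    (hcd : c ≠ d) (f : α → M) :
    (∑ u : α, if u = a ∨ u = b ∨ u = c ∨ u = d then f u else 0)
      = f a + f b + f c + f d := by
  have key : ∀ u : α, (if u = a ∨ u = b ∨ u = c ∨ u = d then f u else 0)
      = (if u = a then f u else 0) + (if u = b then f u else 0)
        + (if u = c then f u else 0) + (if u = d then f u else 0) := by
    intro u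
    by_cases h1 : u = a <;> by_cases h2 : u = b <;> by_cases h3 : u = c <;>
      by_cases h4 : u = d <;> simp_all
  simp only [key]
  rw [Finset.sum_add_distrib, Finset.sum_add_distrib, Finset.sum_add_distrib]
  simp [Finset.sum_ite_eq' Finset.univ]

/-! ### Pairwise distinctness of the neighbour quadruples -/

section Distinct

variable [NeZero n] [NeZero m] (hn : 3 ≤ n) (hm : 3 ≤ m) (p : ZMod n × ZMod m)

include hn hm

lemma sum_ite_nbrsL {M : Type*} [AddCommMonoid M] (f : ZMod n × ZMod m → M) :
    (∑ c : ZMod n × ZMod m,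
        if c = (p.1 + 1, p.2) ∨ c = (p.1 - 1, p.2) ∨ c = (p.1, p.2 + 1) ∨ c = (p.1, p.2 - 1)
        then f c else 0)
      = f (p.1 + 1, p.2) + f (p.1 - 1, p.2) + f (p.1, p.2 + 1) + f (p.1, p.2 - 1) := by
  have h1n : (1 : ZMod n) ≠ 0 := one_ne_zero_mod hn
  have h1m : (1 : ZMod m) ≠ 0 := one_ne_zero_mod hm
  have h2n : (2 : ZMod n) ≠ 0 := two_ne_zero_mod hn
  have h2m : (2 : ZMod m) ≠ 0 := two_ne_zero_mod hm
  refine sum_ite_four ?_ ?_ ?_ ?_ ?_ ?_ f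
  · intro h; exact h2n (by linear_combination congrArg Prod.fst h)
  · intro h; exact h1n (by linear_combination congrArg Prod.fst h)
  · intro h; exact h1n (by linear_combination congrArg Prod.fst h)
  · intro h; exact h1n (by linear_combination -congrArg Prod.fst h)
  · intro h; exact h1n (by linear_combination -congrArg Prod.fst h)
  · intro h; exact h2m (by linear_combination congrArg Prod.snd h)

lemma sum_ite_nbrsF {M : Type*} [AddCommMonoid M] (f : ZMod n × ZMod m → M) :
    (∑ c : ZMod n × ZMod m,
        if c = p ∨ c = (p.1 - 1, p.2) ∨ c = (p.1, p.2 - 1) ∨ c = (p.1 - 1, p.2 - 1)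
        then f c else 0)
      = f p + f (p.1 - 1, p.2) + f (p.1, p.2 - 1) + f (p.1 - 1, p.2 - 1) := by
  have h1n : (1 : ZMod n) ≠ 0 := one_ne_zero_mod hn
  have h1m : (1 : ZMod m) ≠ 0 := one_ne_zero_mod hm
  refine sum_ite_four ?_ ?_ ?_ ?_ ?_ ?_ f
  · intro h; exact h1n (by linear_combination congrArg Prod.fst h)
  · intro h; exact h1m (by linear_combination congrArg Prod.snd h)
  · intro h; exact h1n (by linear_combination congrArg Prod.fst h)
  · intro h; exact h1n (by linear_combination -congrArg Prod.fst h)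
  · intro h; exact h1m (by linear_combination congrArg Prod.snd h)
  · intro h; exact h1n (by linear_combination congrArg Prod.fst h)

lemma sum_ite_nbrsG {M : Type*} [AddCommMonoid M] (f : ZMod n × ZMod m → M) :
    (∑ c : ZMod n × ZMod m,
        if c = p ∨ c = (p.1 + 1, p.2) ∨ c = (p.1, p.2 + 1) ∨ c = (p.1 + 1, p.2 + 1)
        then f c else 0)
      = f p + f (p.1 + 1, p.2) + f (p.1, p.2 + 1) + f (p.1 + 1, p.2 + 1) := by
  have h1n : (1 : ZMod n) ≠ 0 := one_ne_zero_mod hn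
  have h1m : (1 : ZMod m) ≠ 0 := one_ne_zero_mod hm
  refine sum_ite_four ?_ ?_ ?_ ?_ ?_ ?_ f
  · intro h; exact h1n (by linear_combination -congrArg Prod.fst h)
  · intro h; exact h1m (by linear_combination -congrArg Prod.snd h)
  · intro h; exact h1n (by linear_combination -congrArg Prod.fst h)
  · intro h; exact h1n (by linear_combination congrArg Prod.fst h)
  · intro h; exact h1m (by linear_combination -congrArg Prod.snd h)
  · intro h; exact h1n (by linear_combination -congrArg Prod.fst h)

end Distinct

/-! ### Degrees -/

lemma degree_inl [NeZero n] [NeZero m] (hn : 3 ≤ n) (hm : 3 ≤ m) (p : ZMod n × ZMod m) :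
    (UJL n m).degree (Sum.inl p) = 8 := by
  rw [SimpleGraph.degree, SimpleGraph.neighborFinset_eq_filter, Finset.card_filter]
  rw [Fintype.sum_sum_type]
  simp only [adj_ll hn hm, adj_lr]
  rw [sum_ite_nbrsL hn hm p (fun _ => (1 : ℕ)), sum_ite_nbrsF hn hm p (fun _ => (1 : ℕ))]
  norm_num

lemma degree_inr [NeZero n] [NeZero m] (hn : 3 ≤ n) (hm : 3 ≤ m) (p : ZMod n × ZMod m) :
    (UJL n m).degree (Sum.inr p) = 4 := by
  rw [SimpleGraph.degree, SimpleGraph.neighborFinset_eq_filter, Finset.card_filter]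
  rw [Fintype.sum_sum_type]
  have hrr : ∀ c : ZMod n × ZMod m,
      (if (UJL n m).Adj (Sum.inr p) (Sum.inr c) then (1 : ℕ) else 0) = 0 := by
    intro c; rw [if_neg (adj_rr p c)]
  simp only [adj_rl, hrr, Finset.sum_const_zero, add_zero]
  rw [sum_ite_nbrsG hn hm p (fun _ => (1 : ℕ))]

/-! ### The `U` and `D` matrices -/

/-- Block-diagonal Fourier matrix on the vertex set. -/
def Umat (n m : ℕ) : Matrix (UJLVert n m) (UJLVert n m) ℂ
  | Sum.inl p, Sum.inl q => Fm n m p q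
  | Sum.inr p, Sum.inr q => Fm n m p q
  | _, _ => 0

/-- Block-diagonal conjugate Fourier matrix on the vertex set. -/
def Vmat (n m : ℕ) : Matrix (UJLVert n m) (UJLVert n m) ℂ
  | Sum.inl p, Sum.inl q => Gm n m p q
  | Sum.inr p, Sum.inr q => Gm n m p q
  | _, _ => 0

lemma Umat_mul_Vmat [NeZero n] [NeZero m] :
    Umat n m * Vmat n m = ((n * m : ℕ) : ℂ) • 1 := by
  have hFG := Fm_mul_Gm (n := n) (m := m)
  ext a b
  rcases a with p | p <;> rcases b with q | q <;>
    rw [Matrix.mul_apply, Fintype.sum_sum_type] <;>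
    simp only [Umat, Vmat, zero_mul, mul_zero, Finset.sum_const_zero, add_zero, zero_add]
  · have := congrFun (congrFun hFG p) q
    rw [Matrix.mul_apply] at this
    rw [this, Matrix.smul_apply, Matrix.smul_apply, Matrix.one_apply, Matrix.one_apply]
    simp [Sum.inl.injEq]
  · simp [Matrix.smul_apply, Matrix.one_apply]
  · simp [Matrix.smul_apply, Matrix.one_apply]
  · have := congrFun (congrFun hFG p) q
    rw [Matrix.mul_apply] at this
    rw [this, Matrix.smul_apply, Matrix.smul_apply, Matrix.one_apply, Matrix.one_apply]
    simp [Sum.inr.injEq]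

lemma det_Umat_ne_zero [NeZero n] [NeZero m] (hn : 3 ≤ n) (hm : 3 ≤ m) :
    (Umat n m).det ≠ 0 := by
  have h := congrArg Matrix.det (Umat_mul_Vmat (n := n) (m := m))
  rw [Matrix.det_mul, Matrix.det_smul, Matrix.det_one, mul_one] at h
  have hnm : ((n * m : ℕ) : ℂ) ≠ 0 := by
    simp only [ne_eq, Nat.cast_eq_zero]
    positivity
  intro h0
  rw [h0, zero_mul] at h
  exact pow_ne_zero _ hnm h.symm

/-- The 2×2 block of the transported matrix at frequency `q`. -/
def Bq (n m : ℕ) (X : ℂ) (q : ZMod n × ZMod m) : Matrix (Fin 2) (Fin 2) ℂ :=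
  !![X - 8 - (χ n q.1 + χ n (-q.1) + χ m q.2 + χ m (-q.2)),
      -((1 + χ n (-q.1)) * (1 + χ m (-q.2)));
    -((1 + χ n q.1) * (1 + χ m q.2)), X - 4]

/-- The block-diagonalized matrix. -/
def Dmat (n m : ℕ) (X : ℂ) : Matrix (UJLVert n m) (UJLVert n m) ℂ
  | Sum.inl c, Sum.inl q => if c = q then Bq n m X q 0 0 else 0
  | Sum.inl c, Sum.inr q => if c = q then Bq n m X q 0 1 else 0
  | Sum.inr c, Sum.inl q => if c = q then Bq n m X q 1 0 else 0
  | Sum.inr c, Sum.inr q => if c = q then Bq n m X q 1 1 else 0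

/-! ### Shift identities for `Fm` -/

section Shifts

variable [NeZero n] [NeZero m] (p q : ZMod n × ZMod m)

lemma Fm_shift_r : Fm n m (p.1 + 1, p.2) q = Fm n m p q * χ n q.1 := by
  simp only [Fm]
  rw [show (p.1 + 1) * q.1 = p.1 * q.1 + q.1 by ring, χ_add]; ring

lemma Fm_shift_l : Fm n m (p.1 - 1, p.2) q = Fm n m p q * χ n (-q.1) := by
  simp only [Fm]
  rw [show (p.1 - 1) * q.1 = p.1 * q.1 + (-q.1) by ring, χ_add]; ring

lemma Fm_shift_u : Fm n m (p.1, p.2 + 1) q = Fm n m p q * χ m q.2 := by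
  simp only [Fm]
  rw [show (p.2 + 1) * q.2 = p.2 * q.2 + q.2 by ring, χ_add]; ring

lemma Fm_shift_d : Fm n m (p.1, p.2 - 1) q = Fm n m p q * χ m (-q.2) := by
  simp only [Fm]
  rw [show (p.2 - 1) * q.2 = p.2 * q.2 + (-q.2) by ring, χ_add]; ring

lemma Fm_shift_ru : Fm n m (p.1 + 1, p.2 + 1) q = Fm n m p q * (χ n q.1 * χ m q.2) := by
  simp only [Fm]
  rw [show (p.1 + 1) * q.1 = p.1 * q.1 + q.1 by ring, χ_add,
    show (p.2 + 1) * q.2 = p.2 * q.2 + q.2 by ring, χ_add]; ring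

lemma Fm_shift_ld : Fm n m (p.1 - 1, p.2 - 1) q = Fm n m p q * (χ n (-q.1) * χ m (-q.2)) := by
  simp only [Fm]
  rw [show (p.1 - 1) * q.1 = p.1 * q.1 + (-q.1) by ring, χ_add,
    show (p.2 - 1) * q.2 = p.2 * q.2 + (-q.2) by ring, χ_add]; ring

end Shifts

/-! ### Entries of the shifted signless Laplacian -/

lemma M_entry [NeZero n] [NeZero m] (hn : 3 ≤ n) (hm : 3 ≤ m) (x : ℝ)
    (a c : UJLVert n m) :
    ((x • (1 : Matrix (UJLVert n m) (UJLVert n m) ℝ) - signlessLaplacianUJL n m).map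
        (Complex.ofRealHom : ℝ →+* ℂ)) a c
      = (if a = c then (x : ℂ) - Sum.elim (fun _ => (8 : ℂ)) (fun _ => 4) a else 0)
        - (if (UJL n m).Adj a c then 1 else 0) := by
  simp only [Matrix.map_apply, Matrix.sub_apply, Matrix.smul_apply, Matrix.one_apply,
    signlessLaplacianUJL, Matrix.add_apply, Matrix.diagonal_apply,
    SimpleGraph.adjMatrix_apply]
  by_cases hac : a = c
  · subst hac
    rcases a with p | p <;>
      simp [degree_inl hn hm, degree_inr hn hm, smul_eq_mul, apply_ite,
        SimpleGraph.irrefl] <;> push_cast <;> ring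
  · simp [hac, apply_ite]

/-! ### The key intertwining identity -/

lemma key [NeZero n] [NeZero m] (hn : 3 ≤ n) (hm : 3 ≤ m) (x : ℝ) :
    ((x • (1 : Matrix (UJLVert n m) (UJLVert n m) ℝ) - signlessLaplacianUJL n m).map
        (Complex.ofRealHom : ℝ →+* ℂ)) * Umat n m
      = Umat n m * Dmat n m (x : ℂ) := by
  ext a b
  rw [Matrix.mul_apply, Matrix.mul_apply, Fintype.sum_sum_type, Fintype.sum_sum_type]
  rcases a with p | p <;> rcases b with q | q
  · -- (inl p, inl q)
    simp only [M_entry hn hm, Umat, Dmat, mul_zero, Finset.sum_const_zero, add_zero,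
      Sum.inl.injEq, Sum.elim_inl, adj_ll hn hm]
    rw [show (∑ c : ZMod n × ZMod m,
        ((if p = c then (x : ℂ) - 8 else 0) -
          (if c = (p.1 + 1, p.2) ∨ c = (p.1 - 1, p.2) ∨ c = (p.1, p.2 + 1) ∨ c = (p.1, p.2 - 1)
            then 1 else 0)) * Fm n m c q)
      = (∑ c : ZMod n × ZMod m, (if p = c then ((x : ℂ) - 8) * Fm n m c q else 0))
        - (∑ c : ZMod n × ZMod m,
            (if c = (p.1 + 1, p.2) ∨ c = (p.1 - 1, p.2) ∨ c = (p.1, p.2 + 1) ∨ c = (p.1, p.2 - 1)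
              then Fm n m c q else 0)) by
        rw [← Finset.sum_sub_distrib]; congr 1; funext c; split <;> split <;> ring]
    rw [Finset.sum_ite_eq Finset.univ p (fun c => ((x : ℂ) - 8) * Fm n m c q),
      sum_ite_nbrsL hn hm p (fun c => Fm n m c q)]
    rw [show (∑ c : ZMod n × ZMod m, Fm n m p c * (if c = q then Bq n m (x : ℂ) q 0 0 else 0))
      = ∑ c : ZMod n × ZMod m, (if c = q then Fm n m p c * Bq n m (x : ℂ) q 0 0 else 0) by
        congr 1; funext c; split <;> ring]
    rw [Finset.sum_ite_eq' Finset.univ q (fun c => Fm n m p c * Bq n m (x : ℂ) q 0 0)]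
    simp only [Finset.mem_univ, if_true]
    rw [Fm_shift_r, Fm_shift_l, Fm_shift_u, Fm_shift_d]
    simp only [Bq, Matrix.cons_val', Matrix.cons_val_zero, Matrix.empty_val',
      Matrix.cons_val_fin_one, Matrix.of_apply]
    simp only [zero_mul, Finset.sum_const_zero, add_zero, zero_add]
    ring
  · -- (inl p, inr q)
    simp only [M_entry hn hm, Umat, Dmat, mul_zero, Finset.sum_const_zero, add_zero, zero_add,
      Sum.elim_inl, adj_lr, reduceCtorEq, if_false, zero_sub, neg_mul]
    rw [show (∑ c : ZMod n × ZMod m,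
        -((if c = p ∨ c = (p.1 - 1, p.2) ∨ c = (p.1, p.2 - 1) ∨ c = (p.1 - 1, p.2 - 1)
            then (1 : ℂ) else 0) * Fm n m c q))
      = -(∑ c : ZMod n × ZMod m,
          (if c = p ∨ c = (p.1 - 1, p.2) ∨ c = (p.1, p.2 - 1) ∨ c = (p.1 - 1, p.2 - 1)
            then Fm n m c q else 0)) by
        rw [← Finset.sum_neg_distrib]; congr 1; funext c; split <;> ring]
    rw [sum_ite_nbrsF hn hm p (fun c => Fm n m c q)]
    rw [show (∑ c : ZMod n × ZMod m, Fm n m p c * (if c = q then Bq n m (x : ℂ) q 0 1 else 0))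
      = ∑ c : ZMod n × ZMod m, (if c = q then Fm n m p c * Bq n m (x : ℂ) q 0 1 else 0) by
        congr 1; funext c; split <;> ring]
    rw [Finset.sum_ite_eq' Finset.univ q (fun c => Fm n m p c * Bq n m (x : ℂ) q 0 1)]
    simp only [Finset.mem_univ, if_true]
    rw [Fm_shift_l, Fm_shift_d, Fm_shift_ld]
    simp only [Bq, Matrix.cons_val', Matrix.cons_val_zero, Matrix.cons_val_one,
      Matrix.head_cons, Matrix.empty_val', Matrix.cons_val_fin_one, Matrix.of_apply]
    simp only [zero_mul, Finset.sum_const_zero, add_zero, zero_add]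
    ring
  · -- (inr p, inl q)
    simp only [M_entry hn hm, Umat, Dmat, mul_zero, Finset.sum_const_zero, add_zero, zero_add,
      Sum.elim_inr, adj_rl, reduceCtorEq, if_false, zero_sub, neg_mul]
    rw [show (∑ c : ZMod n × ZMod m,
        -((if c = p ∨ c = (p.1 + 1, p.2) ∨ c = (p.1, p.2 + 1) ∨ c = (p.1 + 1, p.2 + 1)
            then (1 : ℂ) else 0) * Fm n m c q))
      = -(∑ c : ZMod n × ZMod m,
          (if c = p ∨ c = (p.1 + 1, p.2) ∨ c = (p.1, p.2 + 1) ∨ c = (p.1 + 1, p.2 + 1)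
            then Fm n m c q else 0)) by
        rw [← Finset.sum_neg_distrib]; congr 1; funext c; split <;> ring]
    rw [sum_ite_nbrsG hn hm p (fun c => Fm n m c q)]
    rw [show (∑ c : ZMod n × ZMod m, Fm n m p c * (if c = q then Bq n m (x : ℂ) q 1 0 else 0))
      = ∑ c : ZMod n × ZMod m, (if c = q then Fm n m p c * Bq n m (x : ℂ) q 1 0 else 0) by
        congr 1; funext c; split <;> ring]
    rw [Finset.sum_ite_eq' Finset.univ q (fun c => Fm n m p c * Bq n m (x : ℂ) q 1 0)]
    simp only [Finset.mem_univ, if_true]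
    rw [Fm_shift_r, Fm_shift_u, Fm_shift_ru]
    simp only [Bq, Matrix.cons_val', Matrix.cons_val_zero, Matrix.cons_val_one,
      Matrix.head_cons, Matrix.empty_val', Matrix.cons_val_fin_one, Matrix.of_apply,
      Matrix.head_fin_const]
    simp only [zero_mul, Finset.sum_const_zero, add_zero, zero_add]
    ring
  · -- (inr p, inr q)
    simp only [M_entry hn hm, Umat, Dmat, mul_zero, Finset.sum_const_zero, add_zero, zero_add,
      Sum.inr.injEq, Sum.elim_inr]
    have hadj : ∀ c : ZMod n × ZMod m,
        (if (UJL n m).Adj (Sum.inr p) (Sum.inr c) then (1 : ℂ) else 0) = 0 := by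
      intro c; rw [if_neg (adj_rr p c)]
    simp only [hadj, sub_zero]
    rw [show (∑ c : ZMod n × ZMod m, (if p = c then (x : ℂ) - 4 else 0) * Fm n m c q)
      = ∑ c : ZMod n × ZMod m, (if p = c then ((x : ℂ) - 4) * Fm n m c q else 0) by
        congr 1; funext c; split <;> ring]
    rw [Finset.sum_ite_eq Finset.univ p (fun c => ((x : ℂ) - 4) * Fm n m c q)]
    rw [show (∑ c : ZMod n × ZMod m, Fm n m p c * (if c = q then Bq n m (x : ℂ) q 1 1 else 0))
      = ∑ c : ZMod n × ZMod m, (if c = q then Fm n m p c * Bq n m (x : ℂ) q 1 1 else 0) by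
        congr 1; funext c; split <;> ring]
    rw [Finset.sum_ite_eq' Finset.univ q (fun c => Fm n m p c * Bq n m (x : ℂ) q 1 1)]
    simp only [Finset.mem_univ, if_true]
    simp only [Bq, Matrix.cons_val', Matrix.cons_val_zero, Matrix.cons_val_one,
      Matrix.head_cons, Matrix.empty_val', Matrix.cons_val_fin_one, Matrix.of_apply,
      Matrix.head_fin_const]
    simp only [zero_mul, Finset.sum_const_zero, add_zero, zero_add]
    ring

/-! ### Determinant of the block matrix -/

/-- Reindexing of the vertex set. -/
def eVert (n m : ℕ) : UJLVert n m ≃ Fin 2 × (ZMod n × ZMod m) where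
  toFun := Sum.elim (fun p => ((0 : Fin 2), p)) (fun p => ((1 : Fin 2), p))
  invFun sp := if sp.1 = 0 then Sum.inl sp.2 else Sum.inr sp.2
  left_inv := by rintro (p | p) <;> simp
  right_inv := by
    rintro ⟨s, p⟩
    fin_cases s <;> simp

lemma det_Dmat [NeZero n] [NeZero m] (X : ℂ) :
    (Dmat n m X).det = ∏ q : ZMod n × ZMod m, (Bq n m X q).det := by
  rw [← Matrix.det_reindex_self (eVert n m) (Dmat n m X)]
  have h : Matrix.reindex (eVert n m) (eVert n m) (Dmat n m X)
      = Matrix.blockDiagonal (fun q => Bq n m X q) := by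
    ext ⟨s, p⟩ ⟨t, q⟩
    rw [Matrix.reindex_apply, Matrix.submatrix_apply, Matrix.blockDiagonal_apply]
    fin_cases s <;> fin_cases t <;>
      simp only [eVert, Equiv.coe_fn_symm_mk] <;>
      norm_num <;>
      (simp only [Dmat]
       rcases eq_or_ne p q with rfl | hpq
       · simp
       · simp [hpq])
  rw [h, Matrix.det_blockDiagonal]

/-! ### The final factor computation -/

lemma factor_eq [NeZero n] [NeZero m] (x : ℝ) (i j : ℕ) (hi : i < n) (hj : j < m) :
    (Bq n m (x : ℂ) ((i : ZMod n), (j : ZMod m))).det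
      = ((x ^ 2 - 12 * x + 28 - (x - 2) * (2 * cosα n i + 2 * cosα m j)
          - 4 * (cosα n i * cosα m j) : ℝ) : ℂ) := by
  have hχ_exp : ∀ (N : ℕ) (k : ℕ), k < N → [NeZero N] →
      χ N (k : ZMod N) = Complex.exp (((2 * Real.pi * k / N : ℝ) : ℂ) * Complex.I) := by
    intro N k hk _
    unfold χ
    rw [ZMod.val_cast_of_lt hk, ← Complex.exp_nat_mul]
    congr 1
    push_cast
    ring
  have hw : χ n ((i : ZMod n)) = Complex.exp (((2 * Real.pi * i / n : ℝ) : ℂ) * Complex.I) :=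
    hχ_exp n i hi
  have hz : χ m ((j : ZMod m)) = Complex.exp (((2 * Real.pi * j / m : ℝ) : ℂ) * Complex.I) :=
    hχ_exp m j hj
  have hwwi : χ n ((i : ZMod n)) * χ n (-(i : ZMod n)) = 1 := χ_mul_χ_neg _
  have hzzi : χ m ((j : ZMod m)) * χ m (-(j : ZMod m)) = 1 := χ_mul_χ_neg _
  have hwi : χ n (-(i : ZMod n)) = (χ n ((i : ZMod n)))⁻¹ := eq_inv_of_mul_eq_one_right hwwi
  have hzi : χ m (-(j : ZMod m)) = (χ m ((j : ZMod m)))⁻¹ := eq_inv_of_mul_eq_one_right hzzi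
  have hcw : χ n ((i : ZMod n)) + χ n (-(i : ZMod n)) = 2 * ((cosα n i : ℝ) : ℂ) := by
    rw [hwi, hw, ← Complex.exp_neg, ← neg_mul]
    rw [show ((2 : ℂ) * ((cosα n i : ℝ) : ℂ)) = 2 * Complex.cos ((2 * Real.pi * i / n : ℝ) : ℂ) by
      rw [cosα, Complex.ofReal_cos]]
    rw [Complex.two_cos]
  have hcz : χ m ((j : ZMod m)) + χ m (-(j : ZMod m)) = 2 * ((cosα m j : ℝ) : ℂ) := by
    rw [hzi, hz, ← Complex.exp_neg, ← neg_mul]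
    rw [show ((2 : ℂ) * ((cosα m j : ℝ) : ℂ)) = 2 * Complex.cos ((2 * Real.pi * j / m : ℝ) : ℂ) by
      rw [cosα, Complex.ofReal_cos]]
    rw [Complex.two_cos]
  rw [Bq, Matrix.det_fin_two_of]
  push_cast
  set w := χ n ((i : ZMod n))
  set wi := χ n (-(i : ZMod n))
  set z := χ m ((j : ZMod m))
  set zi := χ m (-(j : ZMod m))
  set X := (x : ℂ)
  set Ca := ((cosα n i : ℝ) : ℂ)
  set Cb := ((cosα m j : ℝ) : ℂ)
  linear_combination (-(X - 4) - (1 + z + zi + z * zi)) * hcw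
    + (-(X - 4) - (2 + 2 * Ca)) * hcz
    + (-(1 + z + zi + z * zi)) * hwwi
    + (-(2 + 2 * Ca)) * hzzi

end UJLProof

/-- For `n, m ≥ 3`, the signless Laplacian characteristic polynomial of the
Union Jack lattice factors as
`det(x·I − Q(UJL(n,m))) = ∏_{i<n} ∏_{j<m} (x² − 12x + 28 − (x−2)(2cos α_i + 2cos β_j) − 4 cos α_i cos β_j)`
with `α_i = 2πi/n`, `β_j = 2πj/m`. -/
theorem signlessLaplacian_charpoly_UJL (n m : ℕ) (hn : 3 ≤ n) (hm : 3 ≤ m) :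
    haveI : NeZero n := ⟨by omega⟩
    haveI : NeZero m := ⟨by omega⟩
    ∀ x : ℝ,
      (x • (1 : Matrix (UJLVert n m) (UJLVert n m) ℝ) - signlessLaplacianUJL n m).det =
        ∏ i ∈ Finset.range n, ∏ j ∈ Finset.range m,
          (x ^ 2 - 12 * x + 28 - (x - 2) * (2 * cosα n i + 2 * cosα m j) -
            4 * (cosα n i * cosα m j)) := by
  haveI : NeZero n := ⟨by omega⟩
  haveI : NeZero m := ⟨by omega⟩
  intro x
  apply Complex.ofReal_injective
  set M0 := x • (1 : Matrix (UJLVert n m) (UJLVert n m) ℝ) - signlessLaplacianUJL n m with hM0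
  have h1 : ((M0.det : ℝ) : ℂ) = ((M0.map (⇑(Complex.ofRealHom : ℝ →+* ℂ))).det) := by
    have h := RingHom.map_det (Complex.ofRealHom : ℝ →+* ℂ) M0
    rw [RingHom.mapMatrix_apply] at h
    exact h
  have hkey := UJLProof.key hn hm x
  have hU := UJLProof.det_Umat_ne_zero (n := n) (m := m) hn hm
  have h2 : (M0.map (Complex.ofRealHom : ℝ →+* ℂ)).det = (UJLProof.Dmat n m (x : ℂ)).det := by
    have := congrArg Matrix.det hkey
    rw [Matrix.det_mul, Matrix.det_mul] at this
    rw [mul_comm ((UJLProof.Umat n m).det)] at this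
    exact mul_right_cancel₀ hU this
  rw [h1, h2, UJLProof.det_Dmat]
  rw [Fintype.prod_prod_type]
  rw [UJLProof.prod_ZMod (g := fun a => ∏ b : ZMod m, (UJLProof.Bq n m (x : ℂ) (a, b)).det)]
  rw [Complex.ofReal_prod]
  refine Finset.prod_congr rfl fun i hi => ?_
  rw [UJLProof.prod_ZMod (g := fun b => (UJLProof.Bq n m (x : ℂ) ((i : ZMod n), b)).det)]
  rw [Complex.ofReal_prod]
  refine Finset.prod_congr rfl fun j hj => ?_
  exact UJLProof.factor_eq x i j (Finset.mem_range.1 hi) (Finset.mem_range.1 hj)
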